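/- arXiv:1202.2220 — 2 statements merged into one kernel-verified Lean document; each statement's English description precedes it below -/
import Mathlib

section
/- Let f : ℝ → ℝ be continuous and positive on (0,∞), let c > 0 with ∫_c^∞ dy/f(y) < ∞, and let z : [0,T_z) → ℝ be the maximal solution of ż = f(z), z(0) = z₀ ≥ c. Then T_z = ∫_{z₀}^∞ dy/f(y) < ∞; in particular z blows up in finite time (z(t) → ∞ as t → T_z). -/
open Set MeasureTheory Filter
open scoped Topology

theorem ode_blowup_time (f : ℝ → ℝ) (hf : Continuous f)
    (hfpos : ∀ s : ℝ, 0 < s → 0 < f s)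
    (c : ℝ) (hc : 0 < c)
    (hint : IntegrableOn (fun y => 1 / f y) (Ici c))
    (z₀ : ℝ) (hz₀ : c ≤ z₀)
    (Tz : ℝ) (hTz : 0 < Tz) (z : ℝ → ℝ)
    (hinit : z 0 = z₀)
    (hsol : ∀ t ∈ Ico (0:ℝ) Tz, HasDerivAt z (f (z t)) t)
    (hmax : ¬ ∃ (T' : ℝ) (w : ℝ → ℝ), Tz < T' ∧ w 0 = z₀ ∧
        ∀ t ∈ Ico (0:ℝ) T', HasDerivAt w (f (w t)) t) :
    Tz = ∫ y in Ioi z₀, 1 / f y ∧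
    Tendsto z (nhdsWithin Tz (Iio Tz)) atTop := by
  have hz₀pos : 0 < z₀ := lt_of_lt_of_le hc hz₀
  -- continuity of 1/f on (0,∞)
  have hfc : ContinuousOn (fun y => 1 / f y) (Ioi 0) :=
    continuousOn_const.div hf.continuousOn (fun y hy => (hfpos y hy).ne')
  have hII : ∀ a b : ℝ, 0 < a → 0 < b →
      IntervalIntegrable (fun y => 1 / f y) volume a b := by
    intro a b ha hb
    apply (hfc.mono ?_).intervalIntegrable
    intro y hy
    exact lt_of_lt_of_le (lt_min ha hb) hy.1
  set g : ℝ → ℝ := fun x => ∫ y in z₀..x, 1 / f y with hgdef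
  have hgd : ∀ x : ℝ, 0 < x → HasDerivAt g (1 / f x) x := by
    intro x hx
    exact intervalIntegral.integral_hasDerivAt_right (hII z₀ x hz₀pos hx)
      (hfc.stronglyMeasurableAtFilter isOpen_Ioi x hx)
      (hfc.continuousAt (isOpen_Ioi.mem_nhds hx))
  have hgz₀ : g z₀ = 0 := intervalIntegral.integral_same
  -- z is continuous on [0, Tz)
  have hzc : ∀ t ∈ Ico (0:ℝ) Tz, ContinuousAt z t := fun t ht => (hsol t ht).continuousAt
  -- Step A: z stays ≥ c
  have hA : ∀ t ∈ Ico (0:ℝ) Tz, c ≤ z t := by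
    intro t ht
    by_contra hlt
    push_neg at hlt
    set b := max (z t) (c / 2) with hb
    have hbpos : 0 < b := lt_max_of_lt_right (by linarith)
    have hbc : b < c := max_lt hlt (by linarith)
    set K := {u | u ∈ Icc (0:ℝ) t ∧ z u ≤ b} with hK
    have hsubIco : Icc (0:ℝ) t ⊆ Ico 0 Tz := Icc_subset_Ico_right ht.2
    have hKt : t ∈ K := ⟨⟨ht.1, le_refl t⟩, le_max_left _ _⟩
    have hKcl : IsClosed K := by
      have hzc2 : ContinuousOn z (Icc 0 t) :=
        fun u hu => (hzc u (hsubIco hu)).continuousWithinAt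
      exact hzc2.preimage_isClosed_of_isClosed isClosed_Icc isClosed_Iic
    have hKbdd : BddBelow K := ⟨0, fun u hu => hu.1.1⟩
    set s := sInf K with hs
    have hsK : s ∈ K := hKcl.csInf_mem ⟨t, hKt⟩ hKbdd
    have hs0 : 0 < s := by
      rcases lt_or_eq_of_le hsK.1.1 with h | h
      · exact h
      · exfalso
        have := hsK.2
        rw [← h, hinit] at this
        linarith
    have hmonos : StrictMonoOn z (Icc 0 s) := by
      apply strictMonoOn_of_deriv_pos (convex_Icc 0 s)
      · exact fun u hu => (hzc u (hsubIco ⟨hu.1, hu.2.trans hsK.1.2⟩)).continuousWithinAt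
      · intro u hu
        rw [interior_Icc] at hu
        have huK : u ∉ K := fun h => absurd (csInf_le hKbdd h) (not_le.mpr hu.2)
        have huIcc : u ∈ Icc (0:ℝ) t := ⟨hu.1.le, (hu.2.le.trans hsK.1.2)⟩
        have hzu : b < z u := by
          by_contra h
          exact huK ⟨huIcc, not_lt.mp h⟩
        rw [(hsol u (hsubIco huIcc)).deriv]
        exact hfpos _ (hbpos.trans hzu)
    have := hmonos (left_mem_Icc.mpr hs0.le) (right_mem_Icc.mpr hs0.le) hs0
    rw [hinit] at this
    have := hsK.2
    linarith
  -- Step B: z is strictly increasing on [0, Tz)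
  have hmono : StrictMonoOn z (Ico 0 Tz) := by
    apply strictMonoOn_of_deriv_pos (convex_Ico 0 Tz)
    · exact fun u hu => (hzc u hu).continuousWithinAt
    · intro u hu
      rw [interior_Ico] at hu
      have hu' : u ∈ Ico (0:ℝ) Tz := ⟨hu.1.le, hu.2⟩
      rw [(hsol u hu').deriv]
      exact hfpos _ (lt_of_lt_of_le hc (hA u hu'))
  have hz₀le : ∀ t ∈ Ico (0:ℝ) Tz, z₀ ≤ z t := by
    intro t ht
    rw [← hinit]
    exact hmono.monotoneOn ⟨le_refl 0, hTz⟩ ht ht.1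
  -- Step D: g (z t) = t on [0, Tz)
  have hgz : ∀ t ∈ Ico (0:ℝ) Tz, g (z t) = t := by
    intro t ht
    have hsubIco : Icc (0:ℝ) t ⊆ Ico 0 Tz := Icc_subset_Ico_right ht.2
    have key : ∀ u ∈ Icc (0:ℝ) t, g (z u) - u = g (z 0) - 0 := by
      apply constant_of_has_deriv_right_zero
      · intro u hu
        have hcu : ContinuousAt (fun v => g (z v) - v) u :=
          (((hgd (z u) (hc.trans_le (hA u (hsubIco hu)))).continuousAt.comp
            (hzc u (hsubIco hu))).sub continuousAt_id)
        exact hcu.continuousWithinAt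
      · intro u hu
        have hu' : u ∈ Ico (0:ℝ) Tz := hsubIco ⟨hu.1, hu.2.le⟩
        have hzu : 0 < z u := hc.trans_le (hA u hu')
        have h1 : HasDerivAt (fun v => g (z v)) (1 / f (z u) * f (z u)) u :=
          (hgd (z u) hzu).comp u (hsol u hu')
        have h2 : HasDerivAt (fun v => g (z v) - v) (1 / f (z u) * f (z u) - 1) u :=
          h1.sub (hasDerivAt_id u)
        have h3 : 1 / f (z u) * f (z u) - 1 = 0 := by
          rw [one_div_mul_cancel (hfpos _ hzu).ne', sub_self]
        rw [h3] at h2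
        exact h2.hasDerivWithinAt
    have := key t ⟨ht.1, le_refl t⟩
    rw [hinit, hgz₀] at this
    linarith
  -- integrability on (z₀, ∞)
  have hIint : IntegrableOn (fun y => 1 / f y) (Ioi z₀) :=
    hint.mono_set (fun y hy => hz₀.trans (le_of_lt hy))
  set I : ℝ := ∫ y in Ioi z₀, 1 / f y with hIdef
  have hnn : 0 ≤ᵐ[volume.restrict (Ioi z₀)] fun y => 1 / f y := by
    filter_upwards [self_mem_ae_restrict measurableSet_Ioi] with y hy
    exact le_of_lt (div_pos one_pos (hfpos y (hz₀pos.trans hy)))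
  have hgle : ∀ x, z₀ ≤ x → g x ≤ I := by
    intro x hx
    rw [hgdef]
    simp only
    rw [intervalIntegral.integral_of_le hx]
    exact setIntegral_mono_set hIint hnn (HasSubset.Subset.eventuallyLE Ioc_subset_Ioi_self)
  have hI0 : 0 ≤ I := by
    have := hgle z₀ (le_refl _)
    rw [hgz₀] at this
    exact this
  -- Tz ≤ I
  have hTzle : Tz ≤ I := by
    by_contra h
    push_neg at h
    set t := (I + Tz) / 2 with ht
    have ht1 : t ∈ Ico (0:ℝ) Tz := ⟨by linarith, by linarith⟩
    have := hgz t ht1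
    have := hgle (z t) (hz₀le t ht1)
    linarith
  have hgtend : Tendsto g atTop (𝓝 I) :=
    intervalIntegral_tendsto_integral_Ioi z₀ hIint tendsto_id
  -- I ≤ Tz by maximality
  have hITz : I ≤ Tz := by
    by_contra hlt
    push_neg at hlt
    set T' := (Tz + I) / 2 with hT'
    have hT'1 : Tz < T' := by rw [hT']; linarith
    have hT'2 : T' < I := by rw [hT']; linarith
    -- choose x₁ large with g x₁ > T'
    obtain ⟨x₁, hx₁a, hx₁b⟩ : ∃ x₁, z₀ + 1 ≤ x₁ ∧ T' < g x₁ := by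
      have h1 : ∀ᶠ x in atTop, T' < g x := hgtend.eventually (eventually_gt_nhds hT'2)
      have h2 : ∀ᶠ x in atTop, z₀ + 1 ≤ x := eventually_ge_atTop (z₀ + 1)
      exact ((h2.and h1).exists).imp (fun x hx => ⟨hx.1, hx.2⟩)
    set x0 := c / 2 with hx0def
    have hx0pos : 0 < x0 := by rw [hx0def]; linarith
    have hx0c : x0 < c := by rw [hx0def]; linarith
    have hz₀x₁ : z₀ < x₁ := by linarith
    have hx0x₁ : x0 < x₁ := by linarith
    have hgcont : ContinuousOn g (Icc x0 x₁) := fun x hx =>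
      (hgd x (hx0pos.trans_le hx.1)).continuousAt.continuousWithinAt
    have hgm : StrictMonoOn g (Icc x0 x₁) := by
      apply strictMonoOn_of_deriv_pos (convex_Icc x0 x₁) hgcont
      intro x hx
      rw [interior_Icc] at hx
      rw [(hgd x (hx0pos.trans hx.1)).deriv]
      exact div_pos one_pos (hfpos x (hx0pos.trans hx.1))
    have hgx0 : g x0 < 0 := by
      have hpos : (0:ℝ) < ∫ y in x0..z₀, 1 / f y := by
        apply intervalIntegral.intervalIntegral_pos_of_pos_on (hII x0 z₀ hx0pos hz₀pos)
        · intro y hy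
          exact div_pos one_pos (hfpos y (hx0pos.trans hy.1))
        · linarith
      have : g x0 = -∫ y in x0..z₀, 1 / f y := intervalIntegral.integral_symm x0 z₀
      rw [this]
      linarith
    have hgx₁pos : 0 < g x₁ := by linarith
    -- the inverse function h
    have hex : ∀ y ∈ Icc (g x0) (g x₁), ∃ x, x ∈ Icc x0 x₁ ∧ g x = y := by
      intro y hy
      have := intermediate_value_Icc hx0x₁.le hgcont hy
      rwa [mem_image] at this
    set h : ℝ → ℝ := fun y =>
      if hy : y ∈ Icc (g x0) (g x₁) then (hex y hy).choose else z₀ with hhdef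
    have hmem : ∀ y ∈ Icc (g x0) (g x₁), h y ∈ Icc x0 x₁ ∧ g (h y) = y := by
      intro y hy
      rw [hhdef]
      simp only [dif_pos hy]
      exact (hex y hy).choose_spec
    have hinj : InjOn g (Icc x0 x₁) := hgm.injOn
    have hmono_h : StrictMonoOn h (Icc (g x0) (g x₁)) := by
      intro y1 h1 y2 h2 hlt12
      by_contra hle
      push_neg at hle
      have := hgm.monotoneOn (hmem y2 h2).1 (hmem y1 h1).1 hle
      rw [(hmem y1 h1).2, (hmem y2 h2).2] at this
      linarith
    have hhinv : ∀ x ∈ Icc x0 x₁, h (g x) = x := by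
      intro x hx
      have hgxmem : g x ∈ Icc (g x0) (g x₁) :=
        ⟨hgm.monotoneOn (left_mem_Icc.mpr hx0x₁.le) hx hx.1,
         hgm.monotoneOn hx (right_mem_Icc.mpr hx0x₁.le) hx.2⟩
      exact hinj (hmem _ hgxmem).1 hx (hmem _ hgxmem).2
    have hmemo : ∀ y ∈ Ioo (g x0) (g x₁), h y ∈ Ioo x0 x₁ := by
      intro y hy
      have hy' : y ∈ Icc (g x0) (g x₁) := Ioo_subset_Icc_self hy
      obtain ⟨hm, heq⟩ := hmem y hy'
      constructor
      · rcases lt_or_eq_of_le hm.1 with h' | h'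
        · exact h'
        · exfalso
          rw [← h'] at heq
          rw [← heq] at hy
          exact lt_irrefl _ hy.1
      · rcases lt_or_eq_of_le hm.2 with h' | h'
        · exact h'
        · exfalso
          have : g (h y) = g x₁ := by rw [h']
          rw [heq] at this; rw [this] at hy; exact lt_irrefl _ hy.2
    have himg : Ioo x0 x₁ ⊆ h '' Ioo (g x0) (g x₁) := by
      intro x hx
      have hx' : x ∈ Icc x0 x₁ := Ioo_subset_Icc_self hx
      refine ⟨g x, ⟨hgm (left_mem_Icc.mpr hx0x₁.le) hx' hx.1,
        hgm hx' (right_mem_Icc.mpr hx0x₁.le) hx.2⟩, hhinv x hx'⟩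
    have hcont_h : ∀ a ∈ Ioo (g x0) (g x₁), ContinuousAt h a := by
      intro a ha
      apply (hmono_h.mono Ioo_subset_Icc_self).continuousAt_of_image_mem_nhds
        (isOpen_Ioo.mem_nhds ha)
      exact mem_of_superset (isOpen_Ioo.mem_nhds (hmemo a ha)) himg
    have hderiv_h : ∀ a ∈ Ioo (g x0) (g x₁), HasDerivAt h (f (h a)) a := by
      intro a ha
      have hha : h a ∈ Ioo x0 x₁ := hmemo a ha
      have hfha : 0 < f (h a) := hfpos _ (hx0pos.trans hha.1)
      have hne : 1 / f (h a) ≠ 0 := (div_pos one_pos hfha).ne'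
      have hev : ∀ᶠ y in 𝓝 a, g (h y) = y := by
        filter_upwards [isOpen_Ioo.mem_nhds ha] with y hy
        exact (hmem y (Ioo_subset_Icc_self hy)).2
      have := HasDerivAt.of_local_left_inverse (hcont_h a ha)
        (hgd (h a) (hx0pos.trans hha.1)) hne hev
      simpa [one_div] using this
    apply hmax
    refine ⟨T', h, hT'1, ?_, ?_⟩
    · have h0mem : (0:ℝ) ∈ Icc (g x0) (g x₁) := ⟨hgx0.le, hgx₁pos.le⟩
      have hz₀mem : z₀ ∈ Icc x0 x₁ := ⟨(hx0c.trans_le hz₀).le, hz₀x₁.le⟩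
      have : h (g z₀) = z₀ := hhinv z₀ hz₀mem
      rwa [hgz₀] at this
    · intro t ht
      apply hderiv_h
      constructor
      · exact hgx0.trans_le ht.1
      · exact ht.2.trans hx₁b
  have hTzI : Tz = I := le_antisymm hTzle hITz
  constructor
  · exact hTzI
  · -- blow up: z is unbounded and monotone
    have hub : ∀ M : ℝ, ∃ t ∈ Ico (0:ℝ) Tz, M < z t := by
      intro M
      by_contra hbd
      push_neg at hbd
      set M' := max M z₀ with hM'
      have hM'pos : 0 < M' := hz₀pos.trans_le (le_max_right _ _)
      -- t ≤ g M' for all t ∈ [0,Tz)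
      have hgM' : ∀ t ∈ Ico (0:ℝ) Tz, t ≤ g M' := by
        intro t ht
        have hzt : 0 < z t := hc.trans_le (hA t ht)
        have hsplit : g (z t) + (∫ y in (z t)..M', 1 / f y) = g M' :=
          intervalIntegral.integral_add_adjacent_intervals
            (hII z₀ (z t) hz₀pos hzt) (hII (z t) M' hzt hM'pos)
        have hnn2 : 0 ≤ ∫ y in (z t)..M', 1 / f y := by
          apply intervalIntegral.integral_nonneg
          · exact le_trans (hbd t ht) (le_max_left _ _)
          · intro y hy
            exact le_of_lt (div_pos one_pos (hfpos y (hzt.trans_le hy.1)))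
        have := hgz t ht
        linarith
      have hgM'0 : 0 ≤ g M' := le_trans (le_refl 0) (hgM' 0 ⟨le_refl 0, hTz⟩)
      have hTzgM' : Tz ≤ g M' := by
        by_contra hcon
        push_neg at hcon
        set t := (g M' + Tz) / 2 with htdef
        have ht1 : t ∈ Ico (0:ℝ) Tz := ⟨by linarith, by linarith⟩
        have := hgM' t ht1
        linarith
      -- but g (M'+1) > g M' and g (M'+1) ≤ I = Tz
      have hsplit2 : g M' + (∫ y in M'..(M'+1), 1 / f y) = g (M'+1) :=
        intervalIntegral.integral_add_adjacent_intervals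
          (hII z₀ M' hz₀pos hM'pos) (hII M' (M'+1) hM'pos (by linarith))
      have hpos2 : (0:ℝ) < ∫ y in M'..(M'+1), 1 / f y := by
        apply intervalIntegral.intervalIntegral_pos_of_pos_on
          (hII M' (M'+1) hM'pos (by linarith))
        · intro y hy
          exact div_pos one_pos (hfpos y (hM'pos.trans hy.1))
        · linarith
      have hle2 : g (M'+1) ≤ I := hgle (M'+1) (by
        have : z₀ ≤ M' := le_max_right _ _
        linarith)
      linarith
    rw [tendsto_atTop]
    intro M
    obtain ⟨t1, ht1, hzt1⟩ := hub M
    filter_upwards [Ioo_mem_nhdsLT_of_mem (⟨ht1.2, le_refl Tz⟩ : Tz ∈ Ioc t1 Tz)]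
      with t htmem
    have ht : t ∈ Ico (0:ℝ) Tz := ⟨ht1.1.trans htmem.1.le, htmem.2⟩
    have := hmono.monotoneOn ht1 ht htmem.1.le
    linarith
end

section
/- Let q > 1, p > 2q+1 > 3, β > 1, N ≥ 1, M > 1 with p(p-1)(p-2q-1) = Nq²/β and M ≥ (Nq/(2(2q+1))) β^{2q/(p-2q-1)}. Let u > 0 and v ≥ 0 be real numbers. Then q√N · u^{q-1} v (u^p + β u^{2q+1}) ≤ M(u^p + β u^{2q+1}) + β(p-2q-1) u^{p+2q} + (p(p-1)u^{p-2} + 2q(2q+1)β u^{2q-1}) v². -/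
open Real

lemma amgm_aux (a b k X Z : ℝ) (ha : 0 < a) (hb : 0 < b) (hk : 0 ≤ k)
    (hab : a*b = k^2) : 2*k*(X*Z) ≤ a*X^2 + b*Z^2 := by
  nlinarith [sq_nonneg (a*X - k*Z), ha, sq_nonneg X, sq_nonneg Z]

set_option maxHeartbeats 1000000 in
theorem eqH_inequality (N q p β M u v : ℝ) (hN : 1 ≤ N) (hq : 1 < q)
    (hp : 2*q + 1 < p) (h3 : 3 < 2*q + 1) (hβ : 1 < β) (hM : 1 < M)
    (hrel : p * (p - 1) * (p - 2*q - 1) = N * q^2 / β)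
    (hMge : M ≥ (N * q / (2 * (2*q + 1))) * β ^ (2*q / (p - 2*q - 1)))
    (hu : 0 < u) (hv : 0 ≤ v) :
    q * Real.sqrt N * u ^ (q-1) * v * (u ^ p + β * u ^ (2*q+1)) ≤
      M * (u ^ p + β * u ^ (2*q+1)) + β * (p - 2*q - 1) * u ^ (p + 2*q)
        + (p * (p-1) * u ^ (p-2) + 2*q*(2*q+1) * β * u ^ (2*q-1)) * v^2 := by
  have hq0 : 0 < q := by linarith
  have hN0 : 0 < N := by linarith
  have hβ0 : 0 < β := by linarith
  have hS0 : 0 < Real.sqrt N := Real.sqrt_pos.mpr hN0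
  set S := Real.sqrt N with hSdef
  have hS2 : S^2 = N := Real.sq_sqrt hN0.le
  have hpow : ∀ x : ℝ, 0 < u ^ x := fun x => Real.rpow_pos_of_pos hu x
  have hv2 : 0 ≤ v^2 := sq_nonneg v
  have hpq : 2*q*(2*q+1) ≤ p*(p-1) := by nlinarith
  have eA : 0 < u^p + β*u^(2*q+1) := by
    have := hpow p; have := hpow (2*q+1); nlinarith
  have e1 : 0 ≤ β*(p-2*q-1)*u^(p+2*q) :=
    mul_nonneg (mul_nonneg hβ0.le (by linarith)) (hpow _).le
  have e2 : 0 ≤ (p*(p-1)*u^(p-2) + 2*q*(2*q+1)*β*u^(2*q-1))*v^2 := by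
    apply mul_nonneg _ hv2
    apply add_nonneg
    · exact mul_nonneg (mul_nonneg (by linarith) (by linarith)) (hpow _).le
    · exact mul_nonneg (mul_nonneg (mul_nonneg (by linarith) (by linarith)) hβ0.le) (hpow _).le
  have hMA : 0 ≤ M*(u^p+β*u^(2*q+1)) := mul_nonneg (by linarith) eA.le
  rcases le_or_gt (q * S * u^(q-1) * v) M with h1 | h1
  · have key : q*S*u^(q-1)*v*(u^p+β*u^(2*q+1)) ≤ M*(u^p+β*u^(2*q+1)) :=
      mul_le_mul_of_nonneg_right h1 eA.le
    linarith
  rcases le_or_gt (q*S*u^(q+1)) (2*q*(2*q+1)*v) with h2 | h2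
  · -- gradient-dominated case
    have ep1 : u^(q-1) * u^p = u^(q+1)*u^(p-2) := by
      rw [← Real.rpow_add hu, ← Real.rpow_add hu]; ring_nf
    have ep2 : u^(q-1) * u^(2*q+1) = u^(q+1)*u^(2*q-1) := by
      rw [← Real.rpow_add hu, ← Real.rpow_add hu]; ring_nf
    have key1 : q*S*u^(q-1)*v*u^p ≤ p*(p-1)*u^(p-2)*v^2 := by
      have c1 : q*S*u^(q-1)*v*u^p = (q*S*u^(q+1))*(u^(p-2)*v) := by
        calc q*S*u^(q-1)*v*u^p = q*S*(u^(q-1)*u^p)*v := by ring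
        _ = q*S*(u^(q+1)*u^(p-2))*v := by rw [ep1]
        _ = (q*S*u^(q+1))*(u^(p-2)*v) := by ring
      have c2 : (q*S*u^(q+1))*(u^(p-2)*v) ≤ (2*q*(2*q+1)*v)*(u^(p-2)*v) :=
        mul_le_mul_of_nonneg_right h2 (mul_nonneg (hpow (p-2)).le hv)
      have c2' : (2*q*(2*q+1)*v)*(u^(p-2)*v) = (2*q*(2*q+1))*(u^(p-2)*v^2) := by ring
      have c3 : (2*q*(2*q+1))*(u^(p-2)*v^2) ≤ (p*(p-1))*(u^(p-2)*v^2) :=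
        mul_le_mul_of_nonneg_right hpq (mul_nonneg (hpow (p-2)).le hv2)
      have c4 : (p*(p-1))*(u^(p-2)*v^2) = p*(p-1)*u^(p-2)*v^2 := by ring
      linarith
    have key2 : q*S*u^(q-1)*v*(β*u^(2*q+1)) ≤ 2*q*(2*q+1)*β*u^(2*q-1)*v^2 := by
      have c1 : q*S*u^(q-1)*v*(β*u^(2*q+1)) = β*((q*S*u^(q+1))*(u^(2*q-1)*v)) := by
        calc q*S*u^(q-1)*v*(β*u^(2*q+1)) = β*(q*S*(u^(q-1)*u^(2*q+1))*v) := by ring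
        _ = β*(q*S*(u^(q+1)*u^(2*q-1))*v) := by rw [ep2]
        _ = β*((q*S*u^(q+1))*(u^(2*q-1)*v)) := by ring
      have c2 : (q*S*u^(q+1))*(u^(2*q-1)*v) ≤ (2*q*(2*q+1)*v)*(u^(2*q-1)*v) :=
        mul_le_mul_of_nonneg_right h2 (mul_nonneg (hpow (2*q-1)).le hv)
      have c3 : β*((q*S*u^(q+1))*(u^(2*q-1)*v)) ≤ β*((2*q*(2*q+1)*v)*(u^(2*q-1)*v)) :=
        mul_le_mul_of_nonneg_left c2 hβ0.le
      have c4 : β*((2*q*(2*q+1)*v)*(u^(2*q-1)*v)) = 2*q*(2*q+1)*β*u^(2*q-1)*v^2 := by ring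
      linarith
    have expand : q*S*u^(q-1)*v*(u^p+β*u^(2*q+1))
        = q*S*u^(q-1)*v*u^p + q*S*u^(q-1)*v*(β*u^(2*q+1)) := by ring
    linarith
  · -- case u large
    have hv0 : 0 < v := by
      by_contra h
      push_neg at h
      have hv' : v = 0 := le_antisymm h hv
      rw [hv'] at h1; nlinarith
    have e3 : u^(q-1)*u^(q+1) = u^(2*q) := by
      rw [← Real.rpow_add hu]; ring_nf
    have hM2 : M * (2*q*(2*q+1)) < q^2*N*u^(2*q) := by
      have c1 : M*(2*q*(2*q+1)) < (q*S*u^(q-1)*v)*(2*q*(2*q+1)) := by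
        apply mul_lt_mul_of_pos_right h1; nlinarith
      have c2 : (q*S*u^(q-1))*(2*q*(2*q+1)*v) < (q*S*u^(q-1))*(q*S*u^(q+1)) := by
        apply mul_lt_mul_of_pos_left h2
        have := hpow (q-1); positivity
      have c3 : (q*S*u^(q-1))*(q*S*u^(q+1)) = q^2*N*u^(2*q) := by
        calc (q*S*u^(q-1))*(q*S*u^(q+1)) = q^2*S^2*(u^(q-1)*u^(q+1)) := by ring
        _ = q^2*N*u^(2*q) := by rw [hS2, e3]
      have c1' : (q*S*u^(q-1)*v)*(2*q*(2*q+1)) = (q*S*u^(q-1))*(2*q*(2*q+1)*v) := by ring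
      linarith
    have hd : (0:ℝ) < 2*(2*q+1) := by linarith
    set B := β ^ (2*q/(p-2*q-1)) with hB
    have hB0 : 0 < B := Real.rpow_pos_of_pos hβ0 _
    have h5 : N*q*B ≤ M*(2*(2*q+1)) := by
      have h6 := mul_le_mul_of_nonneg_right hMge hd.le
      have h7 : N*q/(2*(2*q+1))*B*(2*(2*q+1)) = N*q*B := by
        field_simp
      linarith
    have hβu : B < u^(2*q) := by
      have h8 := mul_le_mul_of_nonneg_left h5 hq0.le
      have hqN : 0 < q^2*N := by positivity
      have heq : q*(N*q*B) = q^2*N*B := by ring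
      have heq2 : q*(M*(2*(2*q+1))) = M*(2*q*(2*q+1)) := by ring
      have h9 : q^2*N*B < q^2*N*(u^(2*q)) := by linarith
      exact (mul_lt_mul_iff_right₀ hqN).mp h9
    have hp0 : 0 < p - 2*q - 1 := by linarith
    have hβu2 : β < u^(p-2*q-1) := by
      have hc : 0 < (p-2*q-1)/(2*q) := by positivity
      have hlt := Real.rpow_lt_rpow hB0.le hβu hc
      rw [hB, ← Real.rpow_mul hβ0.le, ← Real.rpow_mul hu.le] at hlt
      have exp1 : 2*q/(p-2*q-1) * ((p-2*q-1)/(2*q)) = 1 := by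
        field_simp
      have exp2 : 2*q * ((p-2*q-1)/(2*q)) = p-2*q-1 := by
        field_simp
      rwa [exp1, exp2, Real.rpow_one] at hlt
    have hA2 : β*u^(2*q+1) < u^p := by
      have c1 : β*u^(2*q+1) < u^(p-2*q-1)*u^(2*q+1) :=
        mul_lt_mul_of_pos_right hβu2 (hpow _)
      have c2 : u^(p-2*q-1)*u^(2*q+1) = u^p := by
        rw [← Real.rpow_add hu]; ring_nf
      linarith
    have eX : u^(p+2*q) = u^((p+2*q)/2) * u^((p+2*q)/2) := by
      rw [← Real.rpow_add hu]; ring_nf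
    have eY : u^(p-2) = u^((p-2)/2) * u^((p-2)/2) := by
      rw [← Real.rpow_add hu]; ring_nf
    have eXY : u^(q-1)*u^p = u^((p+2*q)/2) * u^((p-2)/2) := by
      rw [← Real.rpow_add hu, ← Real.rpow_add hu]; ring_nf
    set X := u^((p+2*q)/2) with hX
    set Y := u^((p-2)/2) with hY
    have hrel' : β*(p-2*q-1)*(p*(p-1)) = q^2*(S^2) := by
      rw [hS2]
      field_simp at hrel
      linear_combination hrel
    have amgm : 2*(q*S)*(X*(Y*v)) ≤ β*(p-2*q-1)*X^2 + p*(p-1)*(Y*v)^2 := by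
      refine amgm_aux _ _ _ _ _ (mul_pos hβ0 hp0) (mul_pos (by linarith : (0:ℝ) < p) (by linarith : (0:ℝ) < p-1)) (by positivity) ?_
      linear_combination hrel'
    have lhsle : q*S*u^(q-1)*v*(u^p+β*u^(2*q+1)) ≤ 2*(q*S)*(X*(Y*v)) := by
      have c0 : 0 ≤ q*S*u^(q-1)*v := by
        have := hpow (q-1); positivity
      have c1 : q*S*u^(q-1)*v*(u^p+β*u^(2*q+1)) ≤ q*S*u^(q-1)*v*(2*u^p) := by
        apply mul_le_mul_of_nonneg_left _ c0
        linarith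
      have c2 : q*S*u^(q-1)*v*(2*u^p) = 2*(q*S)*(X*(Y*v)) := by
        calc q*S*u^(q-1)*v*(2*u^p) = 2*(q*S)*((u^(q-1)*u^p)*v) := by ring
        _ = 2*(q*S)*((X*Y)*v) := by rw [eXY]
        _ = 2*(q*S)*(X*(Y*v)) := by ring
      linarith
    have hlast : 0 ≤ 2*q*(2*q+1)*β*u^(2*q-1)*v^2 := by
      have := hpow (2*q-1); positivity
    have rw1 : β*(p-2*q-1)*u^(p+2*q) = β*(p-2*q-1)*X^2 := by
      rw [eX, hX]; ring
    have rw2 : p*(p-1)*u^(p-2)*v^2 = p*(p-1)*(Y*v)^2 := by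
      rw [eY, hY]; ring
    have goalexp : (p*(p-1)*u^(p-2) + 2*q*(2*q+1)*β*u^(2*q-1))*v^2
        = p*(p-1)*u^(p-2)*v^2 + 2*q*(2*q+1)*β*u^(2*q-1)*v^2 := by ring
    linarith
end
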